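/- If a/b and c/d, with b, d ≥ 0, (b,d) ≠ (0,0), satisfy ad - bc = 1, then the only rationals x/y (in lowest terms, y ≥ 0) such that x/y forms an integral basis with both (a,b) and (c,d) are the mediant (a+c)/(b+d) and the difference (a-c)/(b-d) (when (b-d, a-c) ≠ (0,0)). -/
import Mathlib


/-- If (a,b) and (c,d) form an integral basis with ad - bc = 1, then the only
integer vectors (x,y) forming an integral basis with both (a,b) and (c,d) are,
up to sign, the mediant (a+c, b+d) and the difference (a-c, b-d). -/
theorem farey_common_neighbors (a b c d x y : ℤ)
    (hb : 0 ≤ b) (hd : 0 ≤ d) (hbd : ¬ (b = 0 ∧ d = 0))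
    (h : a * d - b * c = 1)
    (h1 : |a * y - b * x| = 1) (h2 : |c * y - d * x| = 1) :
    (x, y) = (a + c, b + d) ∨ (x, y) = (-(a + c), -(b + d)) ∨
    (x, y) = (a - c, b - d) ∨ (x, y) = (c - a, d - b) := by
  rw [abs_eq (by norm_num : (0:ℤ) ≤ 1)] at h1 h2
  have hx : x = c*(a*y-b*x) - a*(c*y-d*x) := by linear_combination (-x)*h
  have hy : y = d*(a*y-b*x) - b*(c*y-d*x) := by linear_combination (-y)*h
  rcases h1 with hu|hu <;> rcases h2 with hv|hv <;> rw [hu, hv] at hx hy <;>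
    simp only [Prod.mk.injEq] <;> omega
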